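/- arXiv:2010.07716 — 3 statements merged into one kernel-verified Lean document; each statement's English description precedes it below -/
import Mathlib

section
/- Consider the action of S_3 × S_3 × S_3 on Fin 3 × Fin 6 where the first factor permutes rows, the second permutes columns {0,1,2}, and the third permutes columns {3,4,5}. Let K be the 5-coloring of the 3×6 grid defined by K(i,j) = (j−i) mod 3 for j < 3 (colors 0,1,2), K(i,j) = 3 if j = i+3, and K(i,j) = 4 otherwise. Then the stabilizer of K (elements preserving every color class setwise) is exactly the diagonal cyclic group {(ρ^c, ρ^c, ρ^c) : c ∈ ZMod 3} where ρ is the 3-cycle x ↦ x+1, and this group has exactly 6 orbits on the grid. In particular, K (which has 5 colors) is not the orbit coloring of any subgroup of S_3 × S_3 × S_3. -/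
/-!
A colour-preserving `g` must map the colour-3 diagonal of the right block to itself, forcing
`g.2.2 = g.1`, and must preserve `j - i` on the left block, which forces `g.1` and `g.2.1` to be
the same translation. So the stabilizer is the diagonal `ZMod 3`, whose orbits are the fibres of
`(i, b, j) ↦ (b, j - i)`: six of them. The two colour-4 nodes `(0, true, 1)` and `(1, true, 0)`
lie in different orbits, and every element of a subgroup whose orbits are the colour classes lies
in the stabilizer, so no such subgroup exists.
-/

/-- Nodes of the 3×6 grid: `(i, b, j)` is the node in row `i`, in region A if
`b = false` (columns 0–2, identified with `ZMod 3`) and region B if `b = true`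
(columns 3–5, identified with `ZMod 3`). -/
abbrev Node36 := ZMod 3 × Bool × ZMod 3

/-- The 5-coloring: region A is colored by `j - i` (colors 0,1,2);
region B has color 3 on the diagonal `j = i` and color 4 elsewhere. -/
def K36 (x : Node36) : Fin 5 :=
  if x.2.1 = false then
    ⟨(x.2.2 - x.1).val, lt_of_lt_of_le (ZMod.val_lt _) (by norm_num)⟩
  else if x.2.2 = x.1 then 3 else 4

/-- The action of `S₃ × S₃ × S₃`: the first factor permutes rows, the second
permutes the columns of region A, the third permutes the columns of region B. -/
def act36 (g : Equiv.Perm (ZMod 3) × Equiv.Perm (ZMod 3) × Equiv.Perm (ZMod 3))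
    (x : Node36) : Node36 :=
  (g.1 x.1, x.2.1, if x.2.1 = false then g.2.1 x.2.2 else g.2.2 x.2.2)

open Function

theorem sub_eq_sub_iff_exists_add_const {G : Type*} [AddCommGroup G] {f h : G → G} :
    (∀ i j, h j - f i = j - i) ↔ ∃ c, (∀ x, f x = x + c) ∧ ∀ x, h x = x + c := by
  constructor
  · intro hfh
    refine ⟨h 0, fun x => ?_, fun x => ?_⟩
    · have hx := hfh x 0
      grind
    · have hx := hfh 0 x
      have h0 := hfh 0 0
      grind
  · rintro ⟨c, hf, hh⟩ i j
    rw [hf, hh, add_sub_add_right_eq_sub]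

theorem Set.ncard_fibers_of_surjective {α β : Type*} {f : α → β} (hf : Surjective f) :
    {s : Set α | ∃ x, s = f ⁻¹' {f x}}.ncard = Nat.card β := by
  have : {s : Set α | ∃ x, s = f ⁻¹' {f x}} = Set.range (fun b => f ⁻¹' {b}) := by
    ext s
    constructor
    · rintro ⟨x, rfl⟩
      exact ⟨f x, rfl⟩
    · rintro ⟨b, rfl⟩
      obtain ⟨x, rfl⟩ := hf b
      exact ⟨x, rfl⟩
  rw [this]
  exact Set.ncard_range_of_injective ((Set.preimage_injective.2 hf).comp Set.singleton_injective)

theorem K36_false_eq_iff {i j i' j' : ZMod 3} :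
    K36 (i', false, j') = K36 (i, false, j) ↔ j' - i' = j - i := by
  simp [K36, Fin.ext_iff, (ZMod.val_injective 3).eq_iff]

theorem K36_true_eq_iff {i j i' j' : ZMod 3} :
    K36 (i', true, j') = K36 (i, true, j) ↔ (j' = i' ↔ j = i) := by
  unfold K36
  split_ifs <;> simp_all

section Stabilizer

variable (g : Equiv.Perm (ZMod 3) × Equiv.Perm (ZMod 3) × Equiv.Perm (ZMod 3))

theorem preserves_K36_iff :
    (∀ x, K36 (act36 g x) = K36 x) ↔
      (∀ i j, g.2.1 j - g.1 i = j - i) ∧ ∀ x, g.2.2 x = g.1 x := by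
  constructor
  · intro hg
    refine ⟨fun i j => K36_false_eq_iff.1 (hg (i, false, j)), fun x => ?_⟩
    simpa using K36_true_eq_iff.1 (hg (x, true, x))
  · rintro ⟨hA, hB⟩ ⟨i, _ | _, j⟩
    · exact K36_false_eq_iff.2 (hA i j)
    · exact K36_true_eq_iff.2 (by simp [hB, g.1.injective.eq_iff])

theorem preserves_K36_iff_exists_add :
    (∀ x, K36 (act36 g x) = K36 x) ↔
      ∃ c : ZMod 3, (∀ x, g.1 x = x + c) ∧ (∀ x, g.2.1 x = x + c) ∧ (∀ x, g.2.2 x = x + c) := by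
  rw [preserves_K36_iff, sub_eq_sub_iff_exists_add_const]
  constructor
  · rintro ⟨⟨c, h1, h2⟩, h3⟩
    exact ⟨c, h1, h2, fun x => (h3 x).trans (h1 x)⟩
  · rintro ⟨c, h1, h2, h3⟩
    exact ⟨⟨c, h1, h2⟩, fun x => (h3 x).trans (h1 x).symm⟩

end Stabilizer

def offset36 (x : Node36) : Bool × ZMod 3 := (x.2.1, x.2.2 - x.1)

theorem exists_preserves_K36_act36_eq_iff (x y : Node36) :
    (∃ g, (∀ z, K36 (act36 g z) = K36 z) ∧ act36 g x = y) ↔ offset36 y = offset36 x := by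
  simp only [preserves_K36_iff_exists_add]
  obtain ⟨i, b, j⟩ := x
  constructor
  · rintro ⟨g, ⟨c, h1, h2, h3⟩, rfl⟩
    cases b <;> simp [offset36, act36, h1, h2, h3]
  · obtain ⟨i', b', j'⟩ := y
    rintro hxy
    simp only [offset36, Prod.mk.injEq] at hxy
    obtain ⟨rfl, hd⟩ := hxy
    let t := Equiv.addRight (i' - i)
    refine ⟨(t, t, t), ⟨i' - i, fun _ => rfl, fun _ => rfl, fun _ => rfl⟩, ?_⟩
    simp only [act36, Equiv.coe_addRight, add_sub_cancel, ite_self, Prod.mk.injEq, true_and, t]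
    linear_combination -hd

theorem K36_exotic :
    (∀ g : Equiv.Perm (ZMod 3) × Equiv.Perm (ZMod 3) × Equiv.Perm (ZMod 3),
        (∀ x : Node36, K36 (act36 g x) = K36 x) ↔
          ∃ c : ZMod 3, (∀ x, g.1 x = x + c) ∧ (∀ x, g.2.1 x = x + c) ∧
            (∀ x, g.2.2 x = x + c)) ∧
    {s : Set Node36 | ∃ x : Node36,
        s = {y | ∃ g, (∀ z, K36 (act36 g z) = K36 z) ∧ act36 g x = y}}.ncard = 6 ∧
    ¬ ∃ Sig : Subgroup (Equiv.Perm (ZMod 3) × Equiv.Perm (ZMod 3) × Equiv.Perm (ZMod 3)),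
        ∀ x y : Node36, (∃ g ∈ Sig, act36 g x = y) ↔ K36 x = K36 y := by
  refine ⟨preserves_K36_iff_exists_add, ?_, ?_⟩
  · have hfibre (x : Node36) :
        {y | ∃ g, (∀ z, K36 (act36 g z) = K36 z) ∧ act36 g x = y} = offset36 ⁻¹' {offset36 x} :=
      Set.ext fun y => exists_preserves_K36_act36_eq_iff x y
    simp only [hfibre]
    rw [Set.ncard_fibers_of_surjective (fun p => ⟨(0, p.1, p.2), by simp [offset36]⟩)]
    simp
  · rintro ⟨Sig, hSig⟩
    obtain ⟨g, hg, hxy⟩ := (hSig (0, true, 1) (1, true, 0)).2 (by decide)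
    have hpres : ∀ z, K36 (act36 g z) = K36 z := fun z => ((hSig z _).1 ⟨g, hg, rfl⟩).symm
    exact absurd ((exists_preserves_K36_act36_eq_iff _ _).1 ⟨g, hpres, hxy⟩) (by decide)
end

section
/- Let a finite set of nodes be partitioned into n 'columns' each of size m, with the complete (all-to-all) coupling inside each column and no coupling between columns. Suppose a coloring K of the nodes is balanced, meaning: for any two nodes of the same color, and for every color c, the number of other nodes of color c in the same column is equal. If two columns contain nodes of a common color, then every color appears with the same multiplicity in both columns. -/
lemma col_count_key (m n : ℕ) (C : Type*) [DecidableEq C] (K : Fin m × Fin n → C)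
    (i : Fin m) (j : Fin n) (c : C) :
    (Finset.univ.filter fun z : Fin m × Fin n =>
        z ≠ (i, j) ∧ z.2 = j ∧ K z = c).card + (if K (i, j) = c then 1 else 0) =
      (Finset.univ.filter fun a : Fin m => K (a, j) = c).card := by
  have h1 : (Finset.univ.filter fun z : Fin m × Fin n =>
      z ≠ (i, j) ∧ z.2 = j ∧ K z = c).card =
      (Finset.univ.filter fun a : Fin m => a ≠ i ∧ K (a, j) = c).card := by
    apply Finset.card_bij (fun z _ => z.1)
    · intro z hz
      simp only [Finset.mem_filter, Finset.mem_univ, true_and] at hz ⊢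
      obtain ⟨hne, hcol, hc⟩ := hz
      constructor
      · intro h; apply hne; ext <;> simp [h, hcol]
      · have : z = (z.1, j) := by ext <;> simp [hcol]
        rw [← this]; exact hc
    · intro z hz w hw h
      simp only [Finset.mem_filter, Finset.mem_univ, true_and] at hz hw
      ext <;> simp [h, hz.2.1, hw.2.1]
    · intro a ha
      simp only [Finset.mem_filter, Finset.mem_univ, true_and] at ha
      refine ⟨(a, j), ?_⟩
      simp only [Finset.mem_filter, Finset.mem_univ, true_and]
      exact ⟨⟨fun h => ha.1 (by simpa using congrArg Prod.fst h : a = i), ha.2⟩, trivial⟩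
  rw [h1]
  have h2 : (Finset.univ.filter fun a : Fin m => a ≠ i ∧ K (a, j) = c) =
      (Finset.univ.filter fun a : Fin m => K (a, j) = c).erase i := by
    ext a; simp [and_comm]
  rw [h2]
  by_cases hc : K (i, j) = c
  · have hi : i ∈ Finset.univ.filter fun a : Fin m => K (a, j) = c := by simp [hc]
    rw [if_pos hc, Finset.card_erase_of_mem hi]
    have := Finset.card_pos.mpr ⟨i, hi⟩
    omega
  · have hi : i ∉ Finset.univ.filter fun a : Fin m => K (a, j) = c := by simp [hc]
    rw [if_neg hc, Finset.erase_eq_of_notMem hi, add_zero]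

theorem shared_color_columns_equal_multiplicities
    (m n : ℕ) (C : Type*) [DecidableEq C] (K : Fin m × Fin n → C)
    (hbal : ∀ x y : Fin m × Fin n, K x = K y → ∀ c : C,
      (Finset.univ.filter fun z : Fin m × Fin n =>
          z ≠ x ∧ z.2 = x.2 ∧ K z = c).card =
        (Finset.univ.filter fun z : Fin m × Fin n =>
          z ≠ y ∧ z.2 = y.2 ∧ K z = c).card)
    (j j' : Fin n) (hshare : ∃ i i' : Fin m, K (i, j) = K (i', j')) :
    ∀ c : C, (Finset.univ.filter fun i : Fin m => K (i, j) = c).card =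
      (Finset.univ.filter fun i : Fin m => K (i, j') = c).card := by
  obtain ⟨i, i', hK⟩ := hshare
  intro c
  have hb := hbal (i, j) (i', j') hK c
  have k1 := col_count_key m n C K i j c
  have k2 := col_count_key m n C K i' j' c
  rw [← k1, ← k2, hb, hK]
end

section
/- With the setup of an untrained Wilson network (m×n grid, all-to-all coupling within each column, no coupling between columns) and a balanced coloring K, define two columns to be related if they share a color; extend to the equivalence relation of lying in a common 'block'. Then within each block, every color appearing in the block appears with the same multiplicity in every column of the block, and distinct blocks have disjoint sets of colors. -/
/-- Two columns share a color if some color appears in both. -/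
def sharesColor {m n : ℕ} {C : Type*} (K : Fin m × Fin n → C) (j j' : Fin n) : Prop :=
  ∃ i i' : Fin m, K (i, j) = K (i', j')

/-!
If two nodes have the same color, balance says that, for every color `c`, their columns hold
the same number of `c`-colored nodes other than themselves. Adding the node back in contributes
the same amount on both sides, so the two columns have identical color multiplicities. Hence
multiplicities are constant along chains of color-sharing columns. Disjointness of the blocks'
colors is immediate: a common color makes two columns adjacent.
-/

open Finset

namespace WilsonColumns

variable {m n : ℕ} {C : Type*} [DecidableEq C]

def IsBalanced (K : Fin m × Fin n → C) : Prop :=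
  ∀ x y : Fin m × Fin n, K x = K y → ∀ c : C,
    (univ.filter fun z : Fin m × Fin n => z ≠ x ∧ z.2 = x.2 ∧ K z = c).card =
      (univ.filter fun z : Fin m × Fin n => z ≠ y ∧ z.2 = y.2 ∧ K z = c).card

def multiplicity (K : Fin m × Fin n → C) (j : Fin n) (c : C) : ℕ :=
  (univ.filter fun i : Fin m => K (i, j) = c).card

theorem card_filter_column_eq_multiplicity (K : Fin m × Fin n → C) (j : Fin n) (c : C) :
    (univ.filter fun z : Fin m × Fin n => z.2 = j ∧ K z = c).card = multiplicity K j c := by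
  rw [multiplicity, ← card_map (Function.Embedding.sectL (Fin m) j)]
  congr 1
  ext ⟨i, j'⟩
  simp only [mem_filter, mem_univ, true_and, mem_map, Function.Embedding.sectL_apply,
    Prod.mk.injEq]
  constructor
  · rintro ⟨rfl, hc⟩
    exact ⟨i, hc, rfl, rfl⟩
  · rintro ⟨i, hc, rfl, rfl⟩
    exact ⟨rfl, hc⟩

theorem card_filter_ne_column_add_ite (K : Fin m × Fin n → C) (x : Fin m × Fin n) (c : C) :
    (univ.filter fun z : Fin m × Fin n => z ≠ x ∧ z.2 = x.2 ∧ K z = c).card +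
        (if K x = c then 1 else 0) = multiplicity K x.2 c := by
  set column := univ.filter fun z : Fin m × Fin n => z.2 = x.2 ∧ K z = c
  have h_erase : (univ.filter fun z : Fin m × Fin n => z ≠ x ∧ z.2 = x.2 ∧ K z = c) =
      column.erase x := by
    rw [← filter_ne', filter_filter]
    exact filter_congr fun z _ => and_comm
  rw [h_erase, ← card_filter_column_eq_multiplicity]
  split_ifs with hc
  · exact card_erase_add_one (by simp [column, hc])
  · rw [erase_eq_of_notMem (by simp [column, hc]), add_zero]

theorem IsBalanced.multiplicity_eq_of_eq {K : Fin m × Fin n → C} (hK : IsBalanced K)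
    {x y : Fin m × Fin n} (hxy : K x = K y) (c : C) :
    multiplicity K x.2 c = multiplicity K y.2 c := by
  rw [← card_filter_ne_column_add_ite, ← card_filter_ne_column_add_ite, hK x y hxy c, hxy]

theorem IsBalanced.multiplicity_eq_of_reflTransGen {K : Fin m × Fin n → C} (hK : IsBalanced K)
    {j j' : Fin n} (h : Relation.ReflTransGen (sharesColor K) j j') (c : C) :
    multiplicity K j c = multiplicity K j' c := by
  induction h with
  | refl => rfl
  | tail _ hstep ih =>
    obtain ⟨i, i', hii'⟩ := hstep
    exact ih.trans (hK.multiplicity_eq_of_eq hii' c)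

end WilsonColumns

open WilsonColumns in
theorem block_columns_equal_multiplicities_and_blocks_color_disjoint
    (m n : ℕ) (C : Type*) [DecidableEq C] (K : Fin m × Fin n → C)
    (hbal : ∀ x y : Fin m × Fin n, K x = K y → ∀ c : C,
      (Finset.univ.filter fun z : Fin m × Fin n =>
          z ≠ x ∧ z.2 = x.2 ∧ K z = c).card =
        (Finset.univ.filter fun z : Fin m × Fin n =>
          z ≠ y ∧ z.2 = y.2 ∧ K z = c).card) :
    (∀ j j' : Fin n, Relation.ReflTransGen (sharesColor K) j j' →
      ∀ c : C, (Finset.univ.filter fun i : Fin m => K (i, j) = c).card =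
        (Finset.univ.filter fun i : Fin m => K (i, j') = c).card) ∧
    (∀ j j' : Fin n, ¬ Relation.ReflTransGen (sharesColor K) j j' →
      ∀ c : C, ¬ ((∃ i : Fin m, K (i, j) = c) ∧ ∃ i' : Fin m, K (i', j') = c)) := by
  have hK : IsBalanced K := hbal
  refine ⟨fun j j' hblock c => hK.multiplicity_eq_of_reflTransGen hblock c, ?_⟩
  rintro j j' hnblock c ⟨⟨i, rfl⟩, ⟨i', hi'⟩⟩
  exact hnblock (.single ⟨i, i', hi'.symm⟩)
end
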